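/- arXiv:1503.00914 — 3 statements merged into one kernel-verified Lean document; each statement's English description precedes it below -/
import Mathlib

section
/- For all n ≥ 1, the number of 2-ascent sequences of length n with pairwise distinct entries equals 1 + C(n, 2). -/
/-!
Every entry of a `p`-ascent sequence `a` with `p ≥ 1` is below `p + asc a`: an ascent raises this
bound by one, and a non-ascent appends a value not exceeding the previous entry. So if the entries
of `a` are distinct, exactly `p + 1 + asc a - length a` values can be appended keeping them
distinct. For `p = 2` this forces `asc a ∈ {n - 2, n - 1}` at length `n`: each sequence has one
extension, or two when it is strictly increasing, and the strictly increasing ones are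
`0, 1, …, n` with one positive entry removed. Hence the count grows by `n` from length `n` to
length `n + 1`.
-/

/-- Number of ascents of a sequence: indices j with a_j < a_{j+1}. -/
def ascN (l : List ℕ) : ℕ := (l.zip l.tail).countP (fun q => decide (q.1 < q.2))

/-- `a` is a p-ascent sequence: nonempty, starts with 0, and each later entry
is at most `p` plus the number of ascents of the preceding prefix. -/
def IsPAsc (p : ℕ) (a : List ℕ) : Prop :=
  a.head? = some 0 ∧ ∀ i : Fin a.length, 1 ≤ i.val → a.get i ≤ p + ascN (a.take i.val)

def Avoids01 (a : List ℕ) : Prop := ∀ i j : Fin a.length, i < j → ¬ a.get i < a.get j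

def Avoids10 (a : List ℕ) : Prop := ∀ i j : Fin a.length, i < j → ¬ a.get j < a.get i

def Avoids012 (a : List ℕ) : Prop :=
  ∀ i j k : Fin a.length, i < j → j < k → ¬ (a.get i < a.get j ∧ a.get j < a.get k)

/-- primitive: no two equal consecutive letters -/
def Primitive (a : List ℕ) : Prop := a.Chain' (· ≠ ·)

open Finset

lemma ascN_cons_cons (a c : ℕ) (t : List ℕ) :
    ascN (a :: c :: t) = (if a < c then 1 else 0) + ascN (c :: t) := by
  simp only [ascN, List.tail_cons, List.zip_cons_cons, List.countP_cons, decide_eq_true_eq]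
  omega

lemma ascN_append_singleton {b : List ℕ} (hb : b ≠ []) (v : ℕ) :
    ascN (b ++ [v]) = ascN b + if b.getLast hb < v then 1 else 0 := by
  induction b with
  | nil => contradiction
  | cons a t ih =>
    cases t with
    | nil => rw [List.singleton_append, ascN_cons_cons, List.getLast_singleton]; exact add_comm _ _
    | cons c t =>
      simp only [List.cons_append, ascN_cons_cons] at ih ⊢
      rw [ih (List.cons_ne_nil _ _), List.getLast_cons_cons]
      omega

lemma ascN_add_one_le_length {l : List ℕ} (hl : l ≠ []) : ascN l + 1 ≤ l.length := by
  have := List.countP_le_length (l := l.zip l.tail) (p := fun q => decide (q.1 < q.2))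
  have := List.length_pos_iff.2 hl
  simp only [ascN, List.length_zip, List.length_tail] at *
  omega

lemma ascN_add_one_eq_length_iff {l : List ℕ} (hl : l ≠ []) :
    ascN l + 1 = l.length ↔ l.IsChain (· < ·) := by
  induction l with
  | nil => contradiction
  | cons a t ih =>
    cases t with
    | nil => simp [ascN]
    | cons c t =>
      have := ascN_add_one_le_length (List.cons_ne_nil c t)
      rw [ascN_cons_cons, List.isChain_cons_cons, ← ih (List.cons_ne_nil _ _)]
      simp only [List.length_cons] at *
      split_ifs <;> omega

lemma ascN_add_one_eq_length_of_pairwise {l : List ℕ} (hl : l ≠ [])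
    (h : l.Pairwise (· < ·)) : ascN l + 1 = l.length :=
  (ascN_add_one_eq_length_iff hl).2 (List.isChain_iff_pairwise.2 h)

lemma isPAsc_singleton_zero (p : ℕ) : IsPAsc p [0] :=
  ⟨rfl, fun i hi => absurd i.2 (by simp only [List.length_singleton]; omega)⟩

lemma IsPAsc.ne_nil {p : ℕ} {a : List ℕ} (ha : IsPAsc p a) : a ≠ [] := by
  rintro rfl
  exact absurd ha.1 (by simp)

lemma IsPAsc.zero_mem {p : ℕ} {a : List ℕ} (ha : IsPAsc p a) : 0 ∈ a :=
  List.mem_of_mem_head? ha.1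

lemma isPAsc_append_singleton {p : ℕ} {b : List ℕ} (hb : b ≠ []) (v : ℕ) :
    IsPAsc p (b ++ [v]) ↔ IsPAsc p b ∧ v ≤ p + ascN b := by
  have hlen : 1 ≤ b.length := List.length_pos_iff.2 hb
  simp only [IsPAsc, List.head?_append_of_ne_nil _ hb, List.get_eq_getElem, Fin.forall_iff,
    List.length_append, List.length_singleton]
  constructor
  · rintro ⟨h0, h⟩
    refine ⟨⟨h0, fun i hi h1 => ?_⟩, ?_⟩
    · simpa [List.getElem_append_left hi, List.take_append_of_le_length hi.le] using
        h i (by omega) h1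
    · simpa using h b.length (by omega) hlen
  · rintro ⟨⟨h0, h⟩, hv⟩
    refine ⟨h0, fun i hi h1 => ?_⟩
    rcases Nat.lt_succ_iff_lt_or_eq.1 hi with hi | rfl
    · simpa [List.getElem_append_left hi, List.take_append_of_le_length hi.le] using h i hi h1
    · simpa using hv

lemma IsPAsc.lt_add_ascN {p : ℕ} (hp : 1 ≤ p) {a : List ℕ} (ha : IsPAsc p a) :
    ∀ x ∈ a, x < p + ascN a := by
  induction a using List.reverseRecOn with
  | nil => simp
  | append_singleton b v ih =>
    rcases eq_or_ne b [] with rfl | hb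
    · have h0 : v = 0 := by simpa using ha.1
      simp only [List.nil_append, List.mem_singleton, forall_eq, h0]
      omega
    · rw [isPAsc_append_singleton hb] at ha
      have hlast := ih ha.1 _ (List.getLast_mem hb)
      rw [ascN_append_singleton hb]
      intro x hx
      rcases List.mem_append.1 hx with hx | hx
      · have := ih ha.1 x hx
        split_ifs <;> omega
      · rw [List.mem_singleton] at hx
        subst hx
        split_ifs <;> omega

lemma IsPAsc.length_le_add_ascN {p : ℕ} (hp : 1 ≤ p) {a : List ℕ} (ha : IsPAsc p a)
    (hnd : a.Nodup) : a.length ≤ p + ascN a := by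
  rw [← List.toFinset_card_of_nodup hnd, ← card_range (p + ascN a)]
  exact card_le_card fun x hx => mem_range.2 (ha.lt_add_ascN hp x (List.mem_toFinset.1 hx))

def extensions (p : ℕ) (a : List ℕ) : Finset (List ℕ) :=
  (range (p + 1 + ascN a) \ a.toFinset).image (a ++ [·])

lemma mem_extensions {p : ℕ} {a l : List ℕ} :
    l ∈ extensions p a ↔ ∃ v, v ≤ p + ascN a ∧ v ∉ a ∧ a ++ [v] = l := by
  simp only [extensions, mem_image, mem_sdiff, mem_range, List.mem_toFinset, Nat.lt_succ_iff,
    Nat.add_right_comm p 1, and_assoc]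

lemma card_extensions {p : ℕ} (hp : 1 ≤ p) {a : List ℕ} (ha : IsPAsc p a) (hnd : a.Nodup) :
    (extensions p a).card = p + 1 + ascN a - a.length := by
  have hsub : a.toFinset ⊆ range (p + 1 + ascN a) := fun x hx =>
    mem_range.2 (by have := ha.lt_add_ascN hp x (List.mem_toFinset.1 hx); omega)
  rw [extensions, card_image_of_injective _ fun v w h => by simpa using h,
    card_sdiff_of_subset hsub, card_range, List.toFinset_card_of_nodup hnd]

def nodupPAsc (p : ℕ) : ℕ → Finset (List ℕ)
  | 0 => ∅
  | 1 => {[0]}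
  | n + 2 => (nodupPAsc p (n + 1)).biUnion (extensions p)

lemma nodupPAsc_succ (p : ℕ) {n : ℕ} (hn : 1 ≤ n) :
    nodupPAsc p (n + 1) = (nodupPAsc p n).biUnion (extensions p) := by
  obtain ⟨m, rfl⟩ : ∃ m, n = m + 1 := ⟨n - 1, by omega⟩
  rfl

lemma mem_nodupPAsc {p n : ℕ} (hn : 1 ≤ n) {a : List ℕ} :
    a ∈ nodupPAsc p n ↔ a.length = n ∧ IsPAsc p a ∧ a.Nodup := by
  induction n, hn using Nat.le_induction generalizing a with
  | base =>
    refine ⟨fun h => ?_, fun ⟨hlen, ha, _⟩ => ?_⟩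
    · rw [mem_singleton.1 h]
      exact ⟨rfl, isPAsc_singleton_zero p, List.nodup_singleton 0⟩
    · obtain ⟨x, rfl⟩ := List.length_eq_one_iff.1 hlen
      simpa [nodupPAsc] using ha.1
  | succ n hn ih =>
    rw [nodupPAsc_succ p hn, mem_biUnion]
    constructor
    · rintro ⟨b, hb, hab⟩
      obtain ⟨hlen, hbasc, hnd⟩ := ih.1 hb
      obtain ⟨v, hv, hvb, rfl⟩ := mem_extensions.1 hab
      refine ⟨by simp [hlen], (isPAsc_append_singleton hbasc.ne_nil v).2 ⟨hbasc, hv⟩, ?_⟩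
      rw [← List.concat_eq_append, List.nodup_concat]
      exact ⟨hvb, hnd⟩
    · rintro ⟨hlen, ha, hnd⟩
      obtain ⟨b, v, rfl⟩ := (List.eq_nil_or_concat a).resolve_left ha.ne_nil
      rw [List.nodup_concat] at hnd
      rw [List.concat_eq_append] at hlen ha ⊢
      have hb : b ≠ [] := by
        rintro rfl
        simp only [List.nil_append, List.length_singleton] at hlen
        omega
      rw [isPAsc_append_singleton hb] at ha
      exact ⟨b, ih.2 ⟨by simpa using hlen, ha.1, hnd.2⟩,
        mem_extensions.2 ⟨v, ha.2, hnd.1, rfl⟩⟩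

lemma card_nodupPAsc_succ {p n : ℕ} (hp : 1 ≤ p) (hn : 1 ≤ n) :
    (nodupPAsc p (n + 1)).card = ∑ a ∈ nodupPAsc p n, (p + 1 + ascN a - n) := by
  have hdisj : (nodupPAsc p n : Set (List ℕ)).PairwiseDisjoint (extensions p) := by
    intro a _ b _ hab
    refine disjoint_left.2 fun l hla hlb => hab ?_
    obtain ⟨v, -, -, rfl⟩ := mem_extensions.1 hla
    obtain ⟨w, -, -, h⟩ := mem_extensions.1 hlb
    simpa using congrArg List.dropLast h.symm
  rw [nodupPAsc_succ p hn, card_biUnion hdisj]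
  refine sum_congr rfl fun a ha => ?_
  obtain ⟨hlen, hasc, hnd⟩ := (mem_nodupPAsc hn).1 ha
  rw [card_extensions hp hasc hnd, hlen]

lemma eq_range_erase_of_pairwise_lt {a : List ℕ} {n : ℕ} (hsorted : a.Pairwise (· < ·))
    (hlt : ∀ x ∈ a, x < n + 1) (hlen : a.length = n) :
    ∃ k ≤ n, a = (List.range (n + 1)).erase k := by
  have hnd : a.Nodup := hsorted.imp ne_of_lt
  have hcard : (range (n + 1) \ a.toFinset).card = 1 := by
    rw [card_sdiff_of_subset fun x hx => mem_range.2 (hlt x (List.mem_toFinset.1 hx)),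
      card_range, List.toFinset_card_of_nodup hnd, hlen]
    omega
  obtain ⟨k, hk⟩ := card_eq_one.1 hcard
  have hmissing : ∀ x, x < n + 1 ∧ x ∉ a ↔ x = k := fun x => by
    simpa using Finset.ext_iff.1 hk x
  have hkn : k < n + 1 := ((hmissing k).2 rfl).1
  refine ⟨k, by omega, List.Perm.eq_of_pairwise' hsorted (List.pairwise_lt_range.erase k) ?_⟩
  rw [List.perm_ext_iff_of_nodup hnd (List.nodup_range.erase k)]
  intro x
  rw [List.nodup_range.mem_erase_iff, List.mem_range]
  constructor
  · intro hx
    exact ⟨fun hxk => ((hmissing x).2 hxk).2 hx, hlt x hx⟩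
  · rintro ⟨hxk, hx⟩
    by_contra hxa
    exact hxk ((hmissing x).1 ⟨hx, hxa⟩)

lemma length_range_succ_erase {n k : ℕ} (hkn : k ≤ n) :
    ((List.range (n + 1)).erase k).length = n := by
  rw [List.length_erase_of_mem (List.mem_range.2 (by omega)), List.length_range, Nat.add_sub_cancel]

lemma ascN_range_succ_erase {n k : ℕ} (hn : 1 ≤ n) (hkn : k ≤ n) :
    ascN ((List.range (n + 1)).erase k) + 1 = n := by
  have hlen := length_range_succ_erase hkn
  have hne : (List.range (n + 1)).erase k ≠ [] := by
    rintro h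
    rw [h, List.length_nil] at hlen
    omega
  rw [ascN_add_one_eq_length_of_pairwise hne (List.pairwise_lt_range.erase k), hlen]

lemma isPAsc_two_range_succ_erase {n k : ℕ} (hk : 1 ≤ k) (hkn : k ≤ n) :
    IsPAsc 2 ((List.range (n + 1)).erase k) := by
  induction n, hk.trans hkn using Nat.le_induction generalizing k with
  | base =>
    obtain rfl : k = 1 := by omega
    exact isPAsc_singleton_zero 2
  | succ n hn ih =>
    have extend : ∀ j, 1 ≤ j → j ≤ n → ∀ v ≤ n + 1,
        IsPAsc 2 ((List.range (n + 1)).erase j ++ [v]) := by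
      intro j hj hjn v hv
      have hne : (List.range (n + 1)).erase j ≠ [] :=
        List.ne_nil_of_length_pos (by rw [length_range_succ_erase hjn]; omega)
      have := ascN_range_succ_erase hn hjn
      exact (isPAsc_append_singleton hne v).2 ⟨ih hj hjn, by omega⟩
    rcases Nat.lt_succ_iff_lt_or_eq.1 (Nat.lt_succ_of_le hkn) with hkn | rfl
    · rw [List.range_succ, List.erase_append_left _ (List.mem_range.2 hkn)]
      exact extend k hk (by omega) (n + 1) le_rfl
    · rw [show (List.range (n + 2)).erase (n + 1) = (List.range (n + 1)).erase n ++ [n] by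
        simp [List.range_succ, List.erase_append_right]]
      exact extend n hn le_rfl n (by omega)

lemma filter_nodupPAsc_two_ascN_eq {n : ℕ} (hn : 1 ≤ n) :
    (nodupPAsc 2 n).filter (fun a => ascN a + 1 = n) =
      (Icc 1 n).image fun k => (List.range (n + 1)).erase k := by
  ext a
  simp only [mem_filter, mem_image, mem_Icc, mem_nodupPAsc hn]
  constructor
  · rintro ⟨⟨hlen, ha, -⟩, hasc⟩
    have hsorted : a.Pairwise (· < ·) := List.isChain_iff_pairwise.1
      ((ascN_add_one_eq_length_iff ha.ne_nil).1 (by omega))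
    obtain ⟨k, hkn, rfl⟩ := eq_range_erase_of_pairwise_lt hsorted
      (fun x hx => by have := ha.lt_add_ascN one_le_two x hx; omega) hlen
    have h0 := ha.zero_mem
    rw [List.nodup_range.mem_erase_iff] at h0
    exact ⟨k, ⟨by omega, hkn⟩, rfl⟩
  · rintro ⟨k, ⟨hk, hkn⟩, rfl⟩
    exact ⟨⟨length_range_succ_erase hkn, isPAsc_two_range_succ_erase hk hkn,
      List.nodup_range.erase k⟩, ascN_range_succ_erase hn hkn⟩

lemma card_filter_nodupPAsc_two_ascN_eq {n : ℕ} (hn : 1 ≤ n) :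
    ((nodupPAsc 2 n).filter (fun a => ascN a + 1 = n)).card = n := by
  rw [filter_nodupPAsc_two_ascN_eq hn, card_image_of_injOn, Nat.card_Icc, Nat.add_sub_cancel]
  intro k hk l hl hkl
  simp only at hkl
  by_contra hne
  have hk' : k ∈ (List.range (n + 1)).erase l :=
    List.nodup_range.mem_erase_iff.2
      ⟨hne, List.mem_range.2 (Nat.lt_succ_of_le (mem_Icc.1 hk).2)⟩
  rw [← hkl] at hk'
  exact (List.nodup_range.mem_erase_iff.1 hk').1 rfl

theorem card_nodupPAsc_two {n : ℕ} (hn : 1 ≤ n) : (nodupPAsc 2 n).card = 1 + n.choose 2 := by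
  induction n, hn using Nat.le_induction with
  | base => rfl
  | succ n hn ih =>
    have hterm : ∀ a ∈ nodupPAsc 2 n,
        2 + 1 + ascN a - n = 1 + if ascN a + 1 = n then 1 else 0 := by
      intro a ha
      obtain ⟨hlen, hasc, hnd⟩ := (mem_nodupPAsc hn).1 ha
      have := hasc.length_le_add_ascN one_le_two hnd
      have := ascN_add_one_le_length hasc.ne_nil
      split_ifs <;> omega
    rw [card_nodupPAsc_succ one_le_two hn, sum_congr rfl hterm, sum_add_distrib,
      ← card_eq_sum_ones, ← card_filter, card_filter_nodupPAsc_two_ascN_eq hn, ih,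
      Nat.choose_succ_succ', Nat.choose_one_right]
    ring

theorem stmt6 (n : ℕ) (hn : 1 ≤ n) :
    Set.ncard {a : List ℕ | a.length = n ∧ IsPAsc 2 a ∧ a.Nodup} = 1 + n.choose 2 := by
  have hset : {a : List ℕ | a.length = n ∧ IsPAsc 2 a ∧ a.Nodup} = ↑(nodupPAsc 2 n) := by
    ext a
    exact (mem_nodupPAsc hn).symm
  rw [hset, Set.ncard_coe_finset, card_nodupPAsc_two hn]
end

section
/- For all n ≥ 1, the number of strictly increasing 3-ascent sequences of length n (equivalently, 3-ascent sequences with no descents and pairwise distinct entries) equals C(n+1, 2). -/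
/-!
In a strictly increasing sequence `0 = a₀ < a₁ < ⋯ < aₙ₋₁` the prefix `a₀, …, aᵢ₋₁` has exactly
`i - 1` ascents, so the `p`-ascent condition reads `aᵢ ≤ p + i - 1`. As the entries grow by at
least one per step, this holds for every `i` once it holds for the last entry, i.e. once
`aₙ₋₁ ≤ n + p - 2`. Hence these sequences are exactly `0` followed by the increasing enumeration
of an `(n - 1)`-subset of `{1, …, n + p - 2}`, and there are `C(n + p - 2, n - 1)` of them; for
`p = 3` this is `C(n + 1, n - 1) = C(n + 1, 2)`.
-/

lemma ascN_eq_length_sub_one {l : List ℕ} (h : l.IsChain (· < ·)) : ascN l = l.length - 1 := by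
  induction l with
  | nil => rfl
  | cons a t ih =>
    cases t with
    | nil => rfl
    | cons b t =>
      rw [List.isChain_cons_cons] at h
      have := ih h.2
      simp only [ascN, List.zip_cons_cons, List.tail_cons, List.countP_cons] at this ⊢
      simp [h.1, this]

lemma getElem_add_length_le_of_pairwise_lt {l : List ℕ} {M : ℕ} (hl : l.Pairwise (· < ·))
    (hM : ∀ x ∈ l, x ≤ M) (i : ℕ) (hi : i < l.length) : l[i] + l.length ≤ M + i + 1 := by
  induction l generalizing i with
  | nil => simp at hi
  | cons x t ih =>
    rw [List.pairwise_cons] at hl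
    have ih := ih hl.2 (fun y hy => hM y (List.mem_cons_of_mem x hy))
    cases i with
    | zero =>
      cases t with
      | nil => simpa using hM x (by simp)
      | cons y u =>
        have hy := ih 0 (by simp)
        have hxy := hl.1 y (by simp)
        simp only [List.getElem_cons_zero, List.length_cons] at hy ⊢
        omega
    | succ j =>
      have := ih j (by simpa using hi)
      simp only [List.getElem_cons_succ, List.length_cons]
      omega

lemma IsPAsc.eq_zero_cons {p : ℕ} {a : List ℕ} (h : IsPAsc p a) : a = 0 :: a.tail := by
  obtain ⟨hhead, -⟩ := h
  cases a with
  | nil => simp at hhead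
  | cons x t => simpa using hhead

lemma isPAsc_zero_cons_iff {p : ℕ} {t : List ℕ} (h : (0 :: t).IsChain (· < ·)) :
    IsPAsc p (0 :: t) ↔ ∀ j (hj : j < t.length), t[j] ≤ p + j := by
  have hasc (j : ℕ) : ascN ((0 :: t).take (j + 1)) = min (j + 1) (t.length + 1) - 1 := by
    rw [ascN_eq_length_sub_one (h.take _), List.length_take, List.length_cons]
  constructor
  · rintro ⟨-, hbound⟩ j hj
    have := hbound ⟨j + 1, by simpa using hj⟩ (by simp)
    simp only [List.get_eq_getElem, List.getElem_cons_succ, hasc] at this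
    omega
  · refine fun hbound => ⟨rfl, fun ⟨i, hi⟩ hi1 => ?_⟩
    obtain ⟨j, rfl⟩ : ∃ j, i = j + 1 := ⟨i - 1, by simp only at hi1; omega⟩
    have hj : j < t.length := by simpa using hi
    show t[j] ≤ p + ascN ((0 :: t).take (j + 1))
    rw [hasc]
    have := hbound j hj
    omega

lemma isPAsc_isChain_lt_iff_eq_zero_cons_sort {p n : ℕ} (hn : 1 ≤ n) {a : List ℕ} :
    (a.length = n ∧ IsPAsc p a ∧ a.IsChain (· < ·)) ↔
      ∃ s ∈ (Finset.Icc 1 (n + p - 2)).powersetCard (n - 1), 0 :: s.sort = a := by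
  constructor
  · rintro ⟨hlen, hasc, hchain⟩
    obtain ⟨t, rfl⟩ : ∃ t, a = 0 :: t := ⟨_, hasc.eq_zero_cons⟩
    obtain ⟨hpos, hsorted⟩ := List.pairwise_cons.mp (List.isChain_iff_pairwise.mp hchain)
    have hnodup : t.Nodup := hsorted.imp ne_of_lt
    rw [isPAsc_zero_cons_iff hchain] at hasc
    rw [List.length_cons] at hlen
    refine ⟨t.toFinset, Finset.mem_powersetCard.mpr ⟨fun x hx => ?_, ?_⟩, ?_⟩
    · obtain ⟨j, hj, rfl⟩ := List.mem_iff_getElem.mp (List.mem_toFinset.mp hx)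
      have := hasc j hj
      exact Finset.mem_Icc.mpr ⟨hpos _ (List.getElem_mem hj), by omega⟩
    · rw [List.toFinset_card_of_nodup hnodup]
      omega
    · rw [(List.toFinset_sort _ hnodup).mpr (hsorted.imp le_of_lt)]
  · rintro ⟨s, hs, rfl⟩
    obtain ⟨hsub, hcard⟩ := Finset.mem_powersetCard.mp hs
    have hbounds (x : ℕ) (hx : x ∈ s.sort) : 1 ≤ x ∧ x ≤ n + p - 2 :=
      Finset.mem_Icc.mp (hsub ((Finset.mem_sort _).mp hx))
    have hsorted : s.sort.Pairwise (· < ·) :=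
      List.sortedLT_iff_pairwise.mp (Finset.sortedLT_sort s)
    have hchain : (0 :: s.sort).IsChain (· < ·) := List.isChain_iff_pairwise.mpr
      (List.pairwise_cons.mpr ⟨fun x hx => (hbounds x hx).1, hsorted⟩)
    refine ⟨by simp only [List.length_cons, Finset.length_sort, hcard]; omega, (isPAsc_zero_cons_iff hchain).mpr fun j hj => ?_, hchain⟩
    have := getElem_add_length_le_of_pairwise_lt hsorted
      (fun x hx => (hbounds x hx).2) j hj
    rw [Finset.length_sort, hcard] at this
    rw [Finset.length_sort, hcard] at hj
    omega

theorem ncard_isPAsc_isChain_lt (p : ℕ) {n : ℕ} (hn : 1 ≤ n) :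
    {a : List ℕ | a.length = n ∧ IsPAsc p a ∧ a.IsChain (· < ·)}.ncard =
      (n + p - 2).choose (n - 1) := by
  have hset : {a : List ℕ | a.length = n ∧ IsPAsc p a ∧ a.IsChain (· < ·)} =
      (fun s : Finset ℕ => 0 :: s.sort) ''
        ↑((Finset.Icc 1 (n + p - 2)).powersetCard (n - 1)) := by
    ext a
    simp only [Set.mem_ofPred_eq, Set.mem_image, Finset.mem_coe]
    exact isPAsc_isChain_lt_iff_eq_zero_cons_sort hn
  have hinj : Function.Injective (fun s : Finset ℕ => 0 :: s.sort) := fun s s' h => by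
    simpa using congrArg (fun l => l.tail.toFinset) h
  rw [hset, Set.ncard_image_of_injective _ hinj, Set.ncard_coe_finset, Finset.card_powersetCard,
    Nat.card_Icc, Nat.add_sub_cancel]

theorem stmt8 (n : ℕ) (hn : 1 ≤ n) :
    Set.ncard {a : List ℕ | a.length = n ∧ IsPAsc 3 a ∧ a.Chain' (· < ·)} =
      (n + 1).choose 2 :=
  (ncard_isPAsc_isChain_lt 3 hn).trans (Nat.choose_symm_of_eq_add (by omega))
end

section
/- For all n ≥ 5, the number of 4-ascent sequences of length n avoiding the pattern 012 equals (2^(n-5)/3)·(n³ + 12n² + 29n + 6). -/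
/-! Because a sequence starts with 0, an occurrence of 012 is the same as a nonzero entry
followed by a larger one, so avoiding 012 means the nonzero entries weakly decrease. Up to the
first nonzero entry the sequence has no ascents, so the ascent condition bounds that entry, and
hence every entry, by `p`; conversely, entries bounded by `p` always satisfy it. What remains is
the number `g r m` of words of length `m` over `{0, …, r}` with weakly decreasing nonzero letters
(`decWords r m`): splitting off the first letter gives `g r (m + 1) = g r m + ∑_{v=1}^{r} g v m`,
which is solved successively for `r = 1, 2, 3, 4`. -/

def decWords (r m : ℕ) : Set (List ℕ) :=
  {t | t.length = m ∧ (∀ x ∈ t, x ≤ r) ∧ t.Pairwise (fun a b => a ≠ 0 → b ≤ a)}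

lemma decWords_zero (r : ℕ) : decWords r 0 = {[]} := by
  ext t
  simp +contextual [decWords, List.length_eq_zero_iff]

lemma cons_mem_decWords_succ {r m v : ℕ} {t : List ℕ} :
    v :: t ∈ decWords r (m + 1) ↔ v ≤ r ∧ t ∈ decWords (if v = 0 then r else v) m := by
  simp only [decWords, Set.mem_ofPred_eq, List.length_cons, Nat.add_right_cancel_iff,
    List.forall_mem_cons, List.pairwise_cons]
  by_cases hv : v = 0
  · simp [hv]
  · simp only [hv, if_false, ne_eq, not_false_eq_true, forall_const]
    constructor
    · rintro ⟨hlen, ⟨hvr, -⟩, hle, hpw⟩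
      exact ⟨hvr, hlen, hle, hpw⟩
    · rintro ⟨hvr, hlen, hle, hpw⟩
      exact ⟨hlen, ⟨hvr, fun x hx => (hle x hx).trans hvr⟩, hle, hpw⟩

lemma decWords_succ (r m : ℕ) :
    decWords r (m + 1) =
      ⋃ v ∈ (Finset.range (r + 1) : Set ℕ), List.cons v '' decWords (if v = 0 then r else v) m := by
  ext t
  simp only [Set.mem_iUnion, Finset.coe_range, Set.mem_Iio, Set.mem_image, exists_prop,
    Nat.lt_succ_iff]
  constructor
  · intro ht
    obtain _ | ⟨v, t⟩ := t
    · exact absurd ht.1 (by simp)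
    · obtain ⟨hvr, ht⟩ := cons_mem_decWords_succ.mp ht
      exact ⟨v, hvr, t, ht, rfl⟩
  · rintro ⟨v, hvr, t, ht, rfl⟩
    exact cons_mem_decWords_succ.mpr ⟨hvr, ht⟩

lemma decWords_finite (r m : ℕ) : (decWords r m).Finite := by
  induction m generalizing r with
  | zero => simp [decWords_zero]
  | succ m ih =>
    rw [decWords_succ]
    exact (Finset.range (r + 1)).finite_toSet.biUnion fun v _ => (ih _).image _

lemma ncard_decWords_succ (r m : ℕ) :
    (decWords r (m + 1)).ncard =
      ∑ v ∈ Finset.range r, (decWords (v + 1) m).ncard + (decWords r m).ncard := by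
  have hdisj : (↑(Finset.range (r + 1)) : Set ℕ).PairwiseDisjoint
      fun v => List.cons v '' decWords (if v = 0 then r else v) m := by
    intro v _ w _ hvw
    rw [Function.onFun, Set.disjoint_left]
    rintro _ ⟨t, -, rfl⟩ ⟨t', -, h⟩
    exact hvw (List.cons.inj h).1.symm
  rw [decWords_succ, (Finset.range (r + 1)).finite_toSet.ncard_biUnion
    (fun v _ => (decWords_finite _ _).image _) hdisj, finsum_mem_coe_finset,
    Finset.sum_range_succ']
  simp only [Set.ncard_image_of_injective _ List.cons_injective, Nat.add_one_ne_zero, if_false,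
    if_true]

lemma ncard_decWords_one (m : ℕ) : (decWords 1 m).ncard = 2 ^ m := by
  induction m with
  | zero => simp [decWords_zero]
  | succ m ih =>
    rw [ncard_decWords_succ]
    simp only [Finset.sum_range_succ, Finset.sum_range_zero]
    rw [ih]
    ring

lemma ncard_decWords_two (m : ℕ) : 2 * (decWords 2 m).ncard = 2 ^ m * (m + 2) := by
  induction m with
  | zero => simp [decWords_zero]
  | succ m ih =>
    rw [ncard_decWords_succ]
    simp only [Finset.sum_range_succ, Finset.sum_range_zero, zero_add, ncard_decWords_one]
    zify at ih ⊢
    linear_combination 2 * ih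

lemma ncard_decWords_three (m : ℕ) :
    8 * (decWords 3 m).ncard = 2 ^ m * (m ^ 2 + 7 * m + 8) := by
  induction m with
  | zero => simp [decWords_zero]
  | succ m ih =>
    rw [ncard_decWords_succ]
    simp only [Finset.sum_range_succ, Finset.sum_range_zero, zero_add, ncard_decWords_one]
    have h2 := ncard_decWords_two m
    zify at ih h2 ⊢
    linear_combination 2 * ih + 4 * h2

lemma ncard_decWords_four (m : ℕ) :
    48 * (decWords 4 m).ncard = 2 ^ m * (m ^ 3 + 15 * m ^ 2 + 56 * m + 48) := by
  induction m with
  | zero => simp [decWords_zero]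
  | succ m ih =>
    rw [ncard_decWords_succ]
    simp only [Finset.sum_range_succ, Finset.sum_range_zero, zero_add, ncard_decWords_one]
    have h2 := ncard_decWords_two m
    have h3 := ncard_decWords_three m
    zify at ih h2 h3 ⊢
    linear_combination 2 * ih + 24 * h2 + 6 * h3

lemma ascN_eq_zero_of_forall_eq_zero {l : List ℕ} (h : ∀ x ∈ l, x = 0) : ascN l = 0 := by
  rw [ascN, List.countP_eq_zero]
  intro q hq
  obtain ⟨hq₁, hq₂⟩ := List.of_mem_zip hq
  simp [h _ hq₁, h _ (List.mem_of_mem_tail hq₂)]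

lemma avoids012_cons_zero_iff (t : List ℕ) :
    Avoids012 (0 :: t) ↔ t.Pairwise (fun a b => a ≠ 0 → b ≤ a) := by
  rw [List.pairwise_iff_getElem]
  constructor
  · intro h i j hi hj hij hti
    by_contra! hlt
    exact h ⟨0, by simp⟩ ⟨i + 1, by simpa⟩ ⟨j + 1, by simpa⟩ (by simp [Fin.lt_def]) (by simpa)
      ⟨Nat.pos_of_ne_zero hti, hlt⟩
  · rintro h i ⟨_ | j, hj⟩ ⟨_ | k, hk⟩ hij hjk ⟨hlt₁, hlt₂⟩
    · exact absurd hij (Fin.not_lt_zero _)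
    · exact absurd hij (Fin.not_lt_zero _)
    · exact absurd hjk (Fin.not_lt_zero _)
    · simp only [List.length_cons, Nat.add_lt_add_iff_right] at hj hk
      simp only [List.get_eq_getElem, List.getElem_cons_succ] at hlt₁ hlt₂
      exact (h j k hj hk (by simpa using hjk) ((Nat.zero_le _).trans_lt hlt₁).ne').not_gt hlt₂

lemma forall_le_of_isPAsc_cons_zero {p : ℕ} {t : List ℕ} (ha : IsPAsc p (0 :: t))
    (ht : t.Pairwise (fun a b => a ≠ 0 → b ≤ a)) : ∀ x ∈ t, x ≤ p := by
  suffices h : ∀ i (hi : i < t.length), t[i] ≤ p by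
    intro x hx
    obtain ⟨i, hi, rfl⟩ := List.getElem_of_mem hx
    exact h i hi
  intro i
  induction i using Nat.strong_induction_on with
  | _ i ih =>
  intro hi
  by_cases hz : ∀ j (hj : j < i), t[j] = 0
  · have hbound := ha.2 ⟨i + 1, by simpa⟩ (by simp)
    rw [ascN_eq_zero_of_forall_eq_zero] at hbound
    · simpa using hbound
    · intro x hx
      rw [List.take_succ_cons, List.mem_cons] at hx
      obtain rfl | hx := hx
      · rfl
      · obtain ⟨j, hj, rfl⟩ := List.mem_take_iff_getElem.mp hx
        exact hz j (by omega)
  · obtain ⟨j, hj, hne⟩ := not_forall₂.mp hz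
    exact (List.pairwise_iff_getElem.mp ht j i _ hi hj hne).trans (ih j hj _)

lemma isPAsc_cons_zero_of_forall_le {p : ℕ} {t : List ℕ} (ht : ∀ x ∈ t, x ≤ p) :
    IsPAsc p (0 :: t) := by
  refine ⟨rfl, fun i _ => le_add_right ?_⟩
  obtain ⟨_ | i, hi⟩ := i
  · simp
  · exact ht _ (List.getElem_mem _)

lemma setOf_isPAsc_avoids012_eq (p n : ℕ) :
    {a : List ℕ | a.length = n + 1 ∧ IsPAsc p a ∧ Avoids012 a} = List.cons 0 '' decWords p n := by
  ext a
  constructor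
  · rintro ⟨hlen, ha, havoid⟩
    obtain ⟨a₀, t, rfl⟩ := List.exists_cons_of_length_eq_add_one hlen
    obtain rfl : a₀ = 0 := by simpa using ha.1
    rw [avoids012_cons_zero_iff] at havoid
    exact ⟨t, ⟨by simpa using hlen, forall_le_of_isPAsc_cons_zero ha havoid, havoid⟩, rfl⟩
  · rintro ⟨t, ⟨hlen, hle, hpw⟩, rfl⟩
    exact ⟨by simpa, isPAsc_cons_zero_of_forall_le hle, (avoids012_cons_zero_iff t).mpr hpw⟩

theorem stmt13 (n : ℕ) (hn : 5 ≤ n) :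
    3 * Set.ncard {a : List ℕ | a.length = n ∧ IsPAsc 4 a ∧ Avoids012 a} =
      2 ^ (n - 5) * (n ^ 3 + 12 * n ^ 2 + 29 * n + 6) := by
  obtain ⟨k, rfl⟩ : ∃ k, n = k + 5 := ⟨n - 5, by omega⟩
  have hcount := ncard_decWords_four (k + 4)
  rw [setOf_isPAsc_avoids012_eq 4 (k + 4), Set.ncard_image_of_injective _ List.cons_injective,
    Nat.add_sub_cancel]
  apply Nat.eq_of_mul_eq_mul_left (by norm_num : 0 < 16)
  rw [← mul_assoc, show 16 * 3 = 48 by rfl, hcount, pow_add]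
  ring
end
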